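/- Let V be an R-module, 𝐠 = (g₁,…,g_r) ∈ GL(V)^r with g₁⋯g_r = 1, and H_𝐠 ⊆ V^r the submodule of tuples (v₁,…,v_r) with v_i ∈ image(g_i − 1) for all i and v₁(g₂⋯g_r) + v₂(g₃⋯g_r) + ⋯ + v_r = 0. Define Φ(𝐠,β_i) : V^r → V^r by (v₁,…,v_r) ↦ (v₁,…,v_{i-1}, v_{i+1}, v_{i+1}(1 − g_{i+1}^{-1}g_i g_{i+1}) + v_i g_{i+1}, v_{i+2},…,v_r). Then Φ(𝐠,β_i) maps H_𝐠 into H_{𝐠^{β_i}}, where 𝐠^{β_i} = (g₁,…,g_{i+1}, g_{i+1}^{-1}g_i g_{i+1},…,g_r). -/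

import Mathlib

variable {R V : Type*} [CommRing R] [AddCommGroup V] [Module R V]

/-- The right action `v · u` of `u ∈ GL(V)` on `v ∈ V`, with `GL(V)` modelled as units of the
opposite endomorphism ring (so that products of units are row-vector products). -/
def rAct (u : ((Module.End R V)ᵐᵒᵖ)ˣ) (v : V) : V :=
  (MulOpposite.unop u.val) v

/-- The braid operation `𝐠 ↦ 𝐠^{β_i}` on tuples in a group: it replaces the adjacent pair
`(g_i, g_{i+1})` by `(g_{i+1}, g_{i+1}⁻¹ g_i g_{i+1})` and leaves the other entries fixed. -/
def braidAct {G : Type*} [Group G] {r : ℕ} (g : Fin r → G) (i : ℕ) (hi : i + 1 < r) :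
    Fin r → G := fun j =>
  if (j : ℕ) = i then g ⟨i + 1, hi⟩
  else if (j : ℕ) = i + 1 then
    (g ⟨i + 1, hi⟩)⁻¹ * g ⟨i, Nat.lt_of_succ_lt hi⟩ * g ⟨i + 1, hi⟩
  else g j

/-- The braid transformation `Φ(𝐠, β_i)` on tuples of vectors:
`(v₁,…,v_r) ↦ (v₁,…,v_{i-1}, v_{i+1}, v_{i+1}·(1 − g_{i+1}⁻¹g_i g_{i+1}) + v_i·g_{i+1},
v_{i+2},…,v_r)`. -/
def phiBraid {r : ℕ} (g : Fin r → ((Module.End R V)ᵐᵒᵖ)ˣ) (i : ℕ) (hi : i + 1 < r)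
    (v : Fin r → V) : Fin r → V := fun j =>
  if (j : ℕ) = i then v ⟨i + 1, hi⟩
  else if (j : ℕ) = i + 1 then
    (v ⟨i + 1, hi⟩ -
        rAct ((g ⟨i + 1, hi⟩)⁻¹ * g ⟨i, Nat.lt_of_succ_lt hi⟩ * g ⟨i + 1, hi⟩)
          (v ⟨i + 1, hi⟩)) +
      rAct (g ⟨i + 1, hi⟩) (v ⟨i, Nat.lt_of_succ_lt hi⟩)
  else v j

/-!
The two entries of `Φ(𝐠, β_i)` that change are again parabolic: `v_{i+1}` lies in the image of
`g_{i+1} − 1`, and if `v_i = w g_i − w` then the new `(i+1)`-st entry is `u h − u` for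
`h = g_{i+1}⁻¹ g_i g_{i+1}` and `u = w g_{i+1} − v_{i+1}`. For the cocycle relation, the braided
tuple has the same tail products `g_k ⋯ g_r` as `𝐠` except at `k = i + 1`, because
`g_{i+1} h = g_i g_{i+1}`; comparing the two terms at `i` and `i + 1` then shows that `Φ(𝐠, β_i)`
preserves the cocycle sum `v₁(g₂⋯g_r) + ⋯ + v_r` itself.
-/

open Finset

section TailProd

variable {M : Type*} [Monoid M] {r : ℕ}

/-- The tail product `g_{k+1} ⋯ g_r` (0-indexed: the product of the entries with index `≥ k`). -/
def tailProd (g : Fin r → M) (k : ℕ) : M :=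
  ((List.ofFn g).drop k).prod

theorem tailProd_eq_mul_tailProd_succ (g : Fin r → M) {k : ℕ} (hk : k < r) :
    tailProd g k = g ⟨k, hk⟩ * tailProd g (k + 1) := by
  rw [tailProd, tailProd, List.drop_eq_getElem_cons (by simpa using hk), List.prod_cons]
  simp

theorem tailProd_congr_of_le {f f' : Fin r → M} {k : ℕ}
    (h : ∀ j : Fin r, k ≤ j → f j = f' j) : tailProd f k = tailProd f' k := by
  rw [tailProd, tailProd]
  congr 1
  refine List.ext_getElem (by simp) fun n hn _ => ?_
  simp only [List.getElem_drop, List.getElem_ofFn]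
  exact h _ (Nat.le_add_right k n)

theorem tailProd_eq_of_le {f f' : Fin r → M} {k n : ℕ} (hkn : k ≤ n)
    (hn : tailProd f n = tailProd f' n) (h : ∀ j : Fin r, j < n → f j = f' j) :
    tailProd f k = tailProd f' k := by
  induction hkn using Nat.decreasingInduction with
  | self => exact hn
  | of_succ k hkn ih =>
    rcases lt_or_ge k r with hk | hrk
    · rw [tailProd_eq_mul_tailProd_succ f hk, tailProd_eq_mul_tailProd_succ f' hk, ih, h _ hkn]
    · exact tailProd_congr_of_le fun j hj => absurd j.isLt (by omega)

end TailProd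

section Braid

variable {G : Type*} [Group G] {r : ℕ} (g : Fin r → G) (i : ℕ) (hi : i + 1 < r)

theorem braidAct_self : braidAct g i hi ⟨i, Nat.lt_of_succ_lt hi⟩ = g ⟨i + 1, hi⟩ := by
  simp [braidAct]

theorem braidAct_succ :
    braidAct g i hi ⟨i + 1, hi⟩ =
      (g ⟨i + 1, hi⟩)⁻¹ * g ⟨i, Nat.lt_of_succ_lt hi⟩ * g ⟨i + 1, hi⟩ := by
  simp [braidAct]

theorem braidAct_of_ne {j : Fin r} (hj : (j : ℕ) ≠ i) (hj' : (j : ℕ) ≠ i + 1) :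
    braidAct g i hi j = g j := by
  simp [braidAct, hj, hj']

theorem tailProd_braidAct_of_add_two_le {k : ℕ} (hk : i + 2 ≤ k) :
    tailProd (braidAct g i hi) k = tailProd g k :=
  tailProd_congr_of_le fun j hj => braidAct_of_ne g i hi (by omega) (by omega)

theorem tailProd_braidAct_succ :
    tailProd (braidAct g i hi) (i + 1) =
      (g ⟨i + 1, hi⟩)⁻¹ * g ⟨i, Nat.lt_of_succ_lt hi⟩ * g ⟨i + 1, hi⟩ * tailProd g (i + 2) := by
  rw [tailProd_eq_mul_tailProd_succ _ hi, braidAct_succ, tailProd_braidAct_of_add_two_le g i hi le_rfl]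

theorem tailProd_braidAct_of_le {k : ℕ} (hk : k ≤ i) :
    tailProd (braidAct g i hi) k = tailProd g k := by
  refine tailProd_eq_of_le hk ?_ fun j hj => braidAct_of_ne g i hi (by omega) (by omega)
  rw [tailProd_eq_mul_tailProd_succ _ (Nat.lt_of_succ_lt hi), tailProd_braidAct_succ,
    braidAct_self, tailProd_eq_mul_tailProd_succ g (Nat.lt_of_succ_lt hi),
    tailProd_eq_mul_tailProd_succ g hi]
  group

end Braid

theorem Finset.sum_eq_sum_of_eq_off_pair {ι M : Type*} [Fintype ι] [DecidableEq ι]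
    [AddCommMonoid M] {f f' : ι → M} {a b : ι} (hab : a ≠ b) (hpair : f a + f b = f' a + f' b)
    (hoff : ∀ j, j ≠ a → j ≠ b → f j = f' j) : ∑ j, f j = ∑ j, f' j := by
  rw [← sum_add_sum_compl {a, b} f, ← sum_add_sum_compl {a, b} f', sum_pair hab, sum_pair hab,
    hpair]
  congr 1
  refine sum_congr rfl fun j hj => ?_
  simp only [mem_compl, mem_insert, mem_singleton, not_or] at hj
  exact hoff j hj.1 hj.2

theorem rAct_mul (a b : ((Module.End R V)ᵐᵒᵖ)ˣ) (v : V) :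
    rAct (a * b) v = rAct b (rAct a v) := rfl

theorem rAct_add (a : ((Module.End R V)ᵐᵒᵖ)ˣ) (x y : V) :
    rAct a (x + y) = rAct a x + rAct a y := map_add _ _ _

theorem rAct_sub (a : ((Module.End R V)ᵐᵒᵖ)ˣ) (x y : V) :
    rAct a (x - y) = rAct a x - rAct a y := map_sub _ _ _

section Phi

variable {r : ℕ} (g : Fin r → ((Module.End R V)ᵐᵒᵖ)ˣ) (i : ℕ) (hi : i + 1 < r) (v : Fin r → V)

def cocycleSum : V :=
  ∑ j : Fin r, rAct (tailProd g (j + 1)) (v j)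

theorem phiBraid_self : phiBraid g i hi v ⟨i, Nat.lt_of_succ_lt hi⟩ = v ⟨i + 1, hi⟩ := by
  simp [phiBraid]

theorem phiBraid_succ :
    phiBraid g i hi v ⟨i + 1, hi⟩ =
      (v ⟨i + 1, hi⟩ -
          rAct ((g ⟨i + 1, hi⟩)⁻¹ * g ⟨i, Nat.lt_of_succ_lt hi⟩ * g ⟨i + 1, hi⟩)
            (v ⟨i + 1, hi⟩)) +
        rAct (g ⟨i + 1, hi⟩) (v ⟨i, Nat.lt_of_succ_lt hi⟩) := by
  simp [phiBraid]

theorem phiBraid_of_ne {j : Fin r} (hj : (j : ℕ) ≠ i) (hj' : (j : ℕ) ≠ i + 1) :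
    phiBraid g i hi v j = v j := by
  simp [phiBraid, hj, hj']

theorem rAct_conj_sub_sub (a b : ((Module.End R V)ᵐᵒᵖ)ˣ) (w u : V) :
    rAct (b⁻¹ * a * b) (rAct b w - u) - (rAct b w - u) =
      (u - rAct (b⁻¹ * a * b) u) + rAct b (rAct a w - w) := by
  have hconj : rAct (b⁻¹ * a * b) (rAct b w) = rAct b (rAct a w) := by
    rw [← rAct_mul, ← rAct_mul, show b * (b⁻¹ * a * b) = a * b by group]
  rw [rAct_sub, hconj, rAct_sub]
  abel

theorem phiBraid_mem_range_sub_one (hv : ∀ j : Fin r, ∃ w : V, v j = rAct (g j) w - w)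
    (j : Fin r) : ∃ w : V, phiBraid g i hi v j = rAct (braidAct g i hi j) w - w := by
  by_cases hji : (j : ℕ) = i
  · obtain rfl : j = ⟨i, Nat.lt_of_succ_lt hi⟩ := Fin.ext hji
    rw [phiBraid_self, braidAct_self]
    exact hv _
  by_cases hji' : (j : ℕ) = i + 1
  · obtain rfl : j = ⟨i + 1, hi⟩ := Fin.ext hji'
    obtain ⟨w, hw⟩ := hv ⟨i, Nat.lt_of_succ_lt hi⟩
    refine ⟨rAct (g ⟨i + 1, hi⟩) w - v ⟨i + 1, hi⟩, ?_⟩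
    rw [phiBraid_succ, braidAct_succ, hw, rAct_conj_sub_sub]
  · rw [phiBraid_of_ne g i hi v hji hji', braidAct_of_ne g i hi hji hji']
    exact hv j

theorem cocycleSum_phiBraid :
    cocycleSum (braidAct g i hi) (phiBraid g i hi v) = cocycleSum g v := by
  refine Finset.sum_eq_sum_of_eq_off_pair (a := ⟨i, Nat.lt_of_succ_lt hi⟩) (b := ⟨i + 1, hi⟩)
    (by simp [Fin.ext_iff]) ?_ fun j hji hji' => ?_
  · simp only [phiBraid_self, phiBraid_succ, tailProd_braidAct_succ,
      tailProd_braidAct_of_add_two_le g i hi (le_refl (i + 2)), tailProd_eq_mul_tailProd_succ g hi,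
      rAct_mul, rAct_add, rAct_sub]
    abel
  · have hji : (j : ℕ) ≠ i := fun h => hji (Fin.ext h)
    have hji' : (j : ℕ) ≠ i + 1 := fun h => hji' (Fin.ext h)
    rw [phiBraid_of_ne g i hi v hji hji']
    rcases Nat.lt_or_gt_of_ne hji with hlt | hgt
    · rw [tailProd_braidAct_of_le g i hi (by omega)]
    · rw [tailProd_braidAct_of_add_two_le g i hi (by omega)]

end Phi

theorem phiBraid_maps_H_to_H_general {r : ℕ} (g : Fin r → ((Module.End R V)ᵐᵒᵖ)ˣ)
    (i : ℕ) (hi : i + 1 < r)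
    (v : Fin r → V)
    (hv1 : ∀ j : Fin r, ∃ w : V, v j = rAct (g j) w - w)
    (hv2 : ∑ j : Fin r, rAct (((List.ofFn g).drop ((j : ℕ) + 1)).prod) (v j) = 0) :
    (∀ j : Fin r, ∃ w : V, phiBraid g i hi v j = rAct (braidAct g i hi j) w - w) ∧
      ∑ j : Fin r,
        rAct (((List.ofFn (braidAct g i hi)).drop ((j : ℕ) + 1)).prod)
          (phiBraid g i hi v j) = 0 :=
  ⟨phiBraid_mem_range_sub_one g i hi v hv1, (cocycleSum_phiBraid g i hi v).trans hv2⟩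

/-- Let `V` be an `R`-module, `𝐠 = (g₁,…,g_r) ∈ GL(V)^r` with `g₁⋯g_r = 1`,
and let `H_𝐠 ⊆ V^r` be the set of tuples `(v₁,…,v_r)` with `v_i ∈ image(g_i − 1)` for all `i`
and `v₁·(g₂⋯g_r) + v₂·(g₃⋯g_r) + ⋯ + v_r = 0`.  Then `Φ(𝐠, β_i)` maps `H_𝐠` into
`H_{𝐠^{β_i}}`. -/
theorem phiBraid_maps_H_to_H {r : ℕ} (g : Fin r → ((Module.End R V)ᵐᵒᵖ)ˣ)
    (i : ℕ) (hi : i + 1 < r)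
    (hg : (List.ofFn g).prod = 1)
    (v : Fin r → V)
    (hv1 : ∀ j : Fin r, ∃ w : V, v j = rAct (g j) w - w)
    (hv2 : ∑ j : Fin r, rAct (((List.ofFn g).drop ((j : ℕ) + 1)).prod) (v j) = 0) :
    (∀ j : Fin r, ∃ w : V, phiBraid g i hi v j = rAct (braidAct g i hi j) w - w) ∧
      ∑ j : Fin r,
        rAct (((List.ofFn (braidAct g i hi)).drop ((j : ℕ) + 1)).prod)
          (phiBraid g i hi v j) = 0 :=
  phiBraid_maps_H_to_H_general g i hi v hv1 hv2
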